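/- arXiv:2303.15830 — 2 statements merged into one kernel-verified Lean document; each statement's English description precedes it below -/
import Mathlib

section
/- Let W ~ N(m, v²) with v > 0 and set Z = e^W. For constants a, b ∈ ℝ and 0 < q₁ ≤ q₂, one has E[Z·(a + b·Z)·𝟙_{q₁ ≤ Z ≤ q₂}] = a·e^{m + v²/2}·(Φ(k₂) - Φ(k₁)) + b·e^{2m + 2v²}·(Φ(k₂ - v) - Φ(k₁ - v)), where kᵢ = (ln(qᵢ) - m)/v - v for i = 1, 2, and Φ is the standard normal CDF. -/
/-!
Exponential tilting: `exp (c * w)` times the density of `N(m, v²)` is `exp (c * m + c² v² / 2)`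
times the density of `N(m + c v², v²)`. Since `q₁ ≤ e^w ≤ q₂` means `w ∈ [log q₁, log q₂]`, the
two terms `a e^w` and `b e^{2w}` of the integrand (`c = 1, 2`) become Gaussian probabilities of
that interval, which standardise to differences of `Φ`.
-/

open MeasureTheory ProbabilityTheory Real Set
open scoped NNReal

lemma exp_mul_mul_gaussianPDFReal (μ : ℝ) (v : ℝ≥0) (c x : ℝ) :
    exp (c * x) * gaussianPDFReal μ v x
      = exp (c * μ + c ^ 2 * v / 2) * gaussianPDFReal (μ + c * v) v x := by
  rcases eq_or_ne (v : ℝ) 0 with hv | hv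
  · simp [gaussianPDFReal, hv]
  simp only [gaussianPDFReal]
  rw [mul_left_comm, mul_left_comm (exp _), ← exp_add, ← exp_add]
  congr 2
  field_simp
  ring

lemma setIntegral_exp_mul_gaussianReal (μ : ℝ) {v : ℝ≥0} (hv : v ≠ 0) (c : ℝ) {s : Set ℝ}
    (hs : MeasurableSet s) :
    ∫ x in s, exp (c * x) ∂gaussianReal μ v
      = exp (c * μ + c ^ 2 * v / 2) * (gaussianReal (μ + c * v) v).real s := by
  rw [← integral_indicator hs, integral_gaussianReal_eq_integral_smul hv, measureReal_def,
    gaussianReal_apply_eq_integral _ hv, ENNReal.toReal_ofReal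
      (setIntegral_nonneg hs fun x _ ↦ gaussianPDFReal_nonneg _ _ x),
    ← integral_const_mul, ← integral_indicator hs]
  congr 1 with x
  by_cases hx : x ∈ s
  · simp [hx, mul_comm (gaussianPDFReal μ v x), exp_mul_mul_gaussianPDFReal]
  · simp [hx]

lemma measureReal_Icc_eq_sub_Iic {μ : Measure ℝ} [IsFiniteMeasure μ] [NullSingletonClass μ]
    {a b : ℝ} (hab : a ≤ b) : μ.real (Icc a b) = μ.real (Iic b) - μ.real (Iic a) := by
  have h := measureReal_sdiff (μ := μ) (Ioc_subset_Iic_self (a := a) (b := b)) measurableSet_Ioc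
  rw [Iic_sdiff_Ioc_self_of_le hab] at h
  rw [← measureReal_congr Ioc_ae_eq_Icc, h, sub_sub_cancel]

lemma gaussianReal_eq_map_standard (μ σ : ℝ) :
    gaussianReal μ (σ ^ 2).toNNReal = (gaussianReal 0 1).map (fun x ↦ σ * x + μ) := by
  rw [show (fun x ↦ σ * x + μ) = (· + μ) ∘ (σ * ·) from rfl,
    ← Measure.map_map (by fun_prop) (by fun_prop), gaussianReal_map_const_mul,
    gaussianReal_map_add_const]
  congr
  · simp
  · ext; simp [sq_nonneg]

lemma gaussianReal_real_Icc (μ : ℝ) {σ : ℝ} (hσ : 0 < σ) {s t : ℝ} (hst : s ≤ t) :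
    (gaussianReal μ (σ ^ 2).toNNReal).real (Icc s t)
      = (gaussianReal 0 1).real (Iic ((t - μ) / σ))
        - (gaussianReal 0 1).real (Iic ((s - μ) / σ)) := by
  have := nullSingletonClass_gaussianReal (μ := 0) one_ne_zero
  have hpre : (fun x ↦ σ * x + μ) ⁻¹' Icc s t = Icc ((s - μ) / σ) ((t - μ) / σ) := by
    ext x
    simp only [mem_preimage, mem_Icc, div_le_iff₀ hσ, le_div_iff₀ hσ]
    constructor <;> rintro ⟨h₁, h₂⟩ <;> constructor <;> linarith
  rw [gaussianReal_eq_map_standard, map_measureReal_apply (by fun_prop) measurableSet_Icc, hpre,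
    measureReal_Icc_eq_sub_Iic (by gcongr)]

/-- For W ~ N(m, v²), Z = e^W, constants a, b and 0 < q₁ ≤ q₂:
E[Z(a + bZ)𝟙_{q₁ ≤ Z ≤ q₂}] = a·e^{m+v²/2}(Φ(k₂) - Φ(k₁)) + b·e^{2m+2v²}(Φ(k₂-v) - Φ(k₁-v))
where kᵢ = (ln qᵢ - m)/v - v and Φ is the standard normal CDF. -/
theorem stmt_9 (m v a b q₁ q₂ : ℝ) (hv : 0 < v) (hq₁ : 0 < q₁) (hq : q₁ ≤ q₂)
    (Φ : ℝ → ℝ)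
    (hΦ : ∀ x, Φ x = ((gaussianReal 0 1) (Set.Iic x)).toReal)
    (k₁ k₂ : ℝ)
    (hk₁ : k₁ = (Real.log q₁ - m) / v - v)
    (hk₂ : k₂ = (Real.log q₂ - m) / v - v) :
    ∫ w, Set.indicator {w : ℝ | q₁ ≤ Real.exp w ∧ Real.exp w ≤ q₂}
        (fun w => Real.exp w * (a + b * Real.exp w)) w
        ∂(gaussianReal m (Real.toNNReal (v ^ 2))) =
      a * Real.exp (m + v ^ 2 / 2) * (Φ k₂ - Φ k₁) +
        b * Real.exp (2 * m + 2 * v ^ 2) * (Φ (k₂ - v) - Φ (k₁ - v)) := by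
  set I := Icc (log q₁) (log q₂)
  have hI : {w | q₁ ≤ exp w ∧ exp w ≤ q₂} = I := by
    ext w
    simp [I, log_le_iff_le_exp hq₁, le_log_iff_exp_le (hq₁.trans_le hq)]
  have hV : (v ^ 2).toNNReal ≠ 0 := (Real.toNNReal_pos.2 (by positivity)).ne'
  have hcoe : ((v ^ 2).toNNReal : ℝ) = v ^ 2 := Real.coe_toNNReal _ (sq_nonneg v)
  have hint (c : ℝ) : IntegrableOn (fun w ↦ exp (c * w)) I (gaussianReal m (v ^ 2).toNNReal) :=
    (by fun_prop : Continuous _).integrableOn_Icc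
  have hΦI (c : ℝ) : (gaussianReal (m + c * v ^ 2) (v ^ 2).toNNReal).real I
      = Φ (k₂ - (c - 1) * v) - Φ (k₁ - (c - 1) * v) := by
    rw [gaussianReal_real_Icc _ hv (log_le_log hq₁ hq), hΦ, hΦ, hk₁, hk₂]
    congr 4 <;> field_simp <;> ring
  calc _ = ∫ w in I, a * exp (1 * w) + b * exp (2 * w) ∂gaussianReal m (v ^ 2).toNNReal := by
        rw [hI, integral_indicator measurableSet_Icc]
        congr 1 with w
        rw [one_mul, two_mul, exp_add]
        ring
    _ = _ := by
      rw [integral_add ((hint 1).const_mul a) ((hint 2).const_mul b), integral_const_mul,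
        integral_const_mul, setIntegral_exp_mul_gaussianReal _ hV _ measurableSet_Icc,
        setIntegral_exp_mul_gaussianReal _ hV _ measurableSet_Icc, hcoe, hΦI, hΦI]
      ring_nf
end

section
/- Lower bound on VaR under a budget constraint: Let Z be a positive atomless integrable random variable with CDF K₀ and let K₁(y) = E[Z·𝟙_{Z ≤ y}]. If X ≥ 0 is a random variable with E[Z·X] = x₀ > 0 and K₁(K₀⁻¹(1-γ)) > 0 for γ ∈ (0,1), then VaR_γ[X] = -G(γ) satisfies -x₀/K₁(K₀⁻¹(1-γ)) ≤ VaR_γ[X] ≤ 0, where G is the upper quantile function of X. -/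
open MeasureTheory Filter Topology

/-!
Let `c = K₀⁻¹(1 - γ)` and take `0 < t < G(γ)`. The quantile definitions give
`P(Z ≤ c) ≤ 1 - γ ≤ P(X > t)` (the first inequality needs `Z` to have no atom at `c`). Since `Z`
is at most `c` on `{Z ≤ c}` and above `c` off it, moving mass from `{Z ≤ c}` to a set of at
least the same probability can only increase `E[Z; ·]`, so
`t · K₁(c) ≤ t · E[Z; X > t] ≤ E[Z X] = x₀`. Letting `t ↑ G(γ)` gives `G(γ) ≤ x₀ / K₁(c)`,
while `G(γ) ≥ 0` because `X ≥ 0`.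
-/

section Bathtub

variable {α : Type*} [MeasurableSpace α] {μ : Measure α} [IsFiniteMeasure μ]

theorem measureReal_sdiff_le_measureReal_sdiff {A B : Set α} (hA : MeasurableSet A)
    (hB : MeasurableSet B) (hμ : μ.real B ≤ μ.real A) : μ.real (B \ A) ≤ μ.real (A \ B) := by
  have hBA := measureReal_inter_add_sdiff (μ := μ) (s := B) hA
  have hAB := measureReal_inter_add_sdiff (μ := μ) (s := A) hB
  rw [Set.inter_comm] at hBA
  linarith

theorem setIntegral_le_setIntegral_of_measureReal_le {f : α → ℝ} (hf : Integrable f μ)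
    {A B : Set α} (hA : MeasurableSet A) (hB : MeasurableSet B) {c : ℝ} (hc : 0 ≤ c)
    (hfB : ∀ x ∈ B \ A, f x ≤ c) (hfA : ∀ x ∈ A \ B, c ≤ f x) (hμ : μ.real B ≤ μ.real A) :
    ∫ x in B, f x ∂μ ≤ ∫ x in A, f x ∂μ := by
  have hBA : ∫ x in B \ A, f x ∂μ ≤ c * μ.real (B \ A) := by
    simpa [setIntegral_const, mul_comm] using
      setIntegral_mono_on hf.integrableOn (integrableOn_const (measure_ne_top μ _))
        (hB.diff hA) hfB
  have hAB : c * μ.real (A \ B) ≤ ∫ x in A \ B, f x ∂μ :=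
    setIntegral_ge_of_const_le_real (hA.diff hB) (measure_ne_top μ _) hfA hf.integrableOn
  have hmass := mul_le_mul_of_nonneg_left (measureReal_sdiff_le_measureReal_sdiff hA hB hμ) hc
  have hsplitA := integral_inter_add_sdiff hB (hf.integrableOn (s := A))
  have hsplitB := integral_inter_add_sdiff hA (hf.integrableOn (s := B))
  rw [Set.inter_comm] at hsplitB
  linarith

end Bathtub

theorem const_mul_setIntegral_le_integral_mul {α : Type*} [MeasurableSpace α] {μ : Measure α}
    {Z X : α → ℝ} (hZ : ∀ᵐ ω ∂μ, 0 ≤ Z ω) (hX : ∀ᵐ ω ∂μ, 0 ≤ X ω) (hZint : Integrable Z μ)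
    (hZX : Integrable (fun ω => Z ω * X ω) μ) {A : Set α} (hA : MeasurableSet A) {t : ℝ}
    (htX : ∀ ω ∈ A, t ≤ X ω) :
    t * ∫ ω in A, Z ω ∂μ ≤ ∫ ω, Z ω * X ω ∂μ :=
  calc t * ∫ ω in A, Z ω ∂μ = ∫ ω in A, t * Z ω ∂μ := (integral_const_mul t _).symm
    _ ≤ ∫ ω in A, Z ω * X ω ∂μ := by
      refine setIntegral_mono_on_ae (hZint.const_mul t).integrableOn hZX.integrableOn hA ?_
      filter_upwards [hZ] with ω hω hωA
      rw [mul_comm]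
      exact mul_le_mul_of_nonneg_left (htX ω hωA) hω
    _ ≤ ∫ ω, Z ω * X ω ∂μ := by
      refine setIntegral_le_integral hZX ?_
      filter_upwards [hZ, hX] with ω hZω hXω
      exact mul_nonneg hZω hXω

theorem measure_lt_le_of_forall_lt_measure_le {α : Type*} [MeasurableSpace α] {μ : Measure α}
    (Y : α → ℝ) {q : ℝ} {m : ENNReal} (h : ∀ y < q, μ {ω | Y ω ≤ y} ≤ m) :
    μ {ω | Y ω < q} ≤ m := by
  obtain ⟨u, hu_mono, hu_lt, hu_lim⟩ := exists_seq_strictMono_tendsto q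
  have hunion : {ω | Y ω < q} = ⋃ n, {ω | Y ω ≤ u n} := by
    change Y ⁻¹' Set.Iio q = ⋃ n, Y ⁻¹' Set.Iic (u n)
    rw [← Set.preimage_iUnion, iUnion_Iic_eq_Iio_of_lt_of_tendsto hu_lt hu_lim]
  have hmono : Monotone fun n => {ω | Y ω ≤ u n} := fun i j hij ω (hω : Y ω ≤ u i) =>
    hω.trans (hu_mono.monotone hij)
  rw [hunion, hmono.measure_iUnion]
  exact iSup_le fun n => h _ (hu_lt n)

theorem pos_of_setIntegral_le_pos {α : Type*} [MeasurableSpace α] {μ : Measure α} {Z : α → ℝ}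
    (hZ : ∀ᵐ ω ∂μ, 0 < Z ω) {c : ℝ} (h : 0 < ∫ ω in {ω | Z ω ≤ c}, Z ω ∂μ) : 0 < c := by
  by_contra! hc
  have hnull : μ {ω | Z ω ≤ c} = 0 :=
    measure_mono_null (fun ω (hω : Z ω ≤ c) => not_lt.2 (hω.trans hc)) hZ
  rw [setIntegral_measure_zero _ hnull] at h
  exact h.false

-- `K₀⁻¹(s) = upperQuantile μ Z s` and `G(s) = upperQuantile μ X s`.
noncomputable def upperQuantile {Ω : Type*} [MeasurableSpace Ω] (μ : Measure Ω) (Y : Ω → ℝ)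
    (s : ℝ) : ℝ :=
  sInf {y | s < (μ {ω | Y ω ≤ y}).toReal}

section UpperQuantile

variable {Ω : Type*} [MeasurableSpace Ω] {μ : Measure Ω} {Y : Ω → ℝ} {s : ℝ}

theorem nonneg_of_lt_measure_le (hY : ∀ᵐ ω ∂μ, 0 ≤ Y ω) (hs : 0 ≤ s) {y : ℝ}
    (hy : s < (μ {ω | Y ω ≤ y}).toReal) : 0 ≤ y := by
  by_contra! hyneg
  have hnull : μ {ω | Y ω ≤ y} = 0 :=
    measure_mono_null (fun ω (hω : Y ω ≤ y) => not_le.2 (hω.trans_lt hyneg)) hY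
  rw [hnull, ENNReal.toReal_zero] at hy
  linarith

theorem upperQuantile_nonneg (hY : ∀ᵐ ω ∂μ, 0 ≤ Y ω) (hs : 0 ≤ s) : 0 ≤ upperQuantile μ Y s :=
  Real.sInf_nonneg fun _ hy => nonneg_of_lt_measure_le hY hs hy

theorem measure_le_le_of_lt_upperQuantile (hY : ∀ᵐ ω ∂μ, 0 ≤ Y ω) (hs : 0 ≤ s) {y : ℝ}
    (hy : y < upperQuantile μ Y s) : (μ {ω | Y ω ≤ y}).toReal ≤ s := by
  have hnot : y ∉ {y | s < (μ {ω | Y ω ≤ y}).toReal} :=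
    notMem_of_lt_csInf hy ⟨0, fun _ hy => nonneg_of_lt_measure_le hY hs hy⟩
  exact not_lt.1 hnot

theorem one_sub_le_measureReal_lt_of_lt_upperQuantile [IsProbabilityMeasure μ] (hYm : Measurable Y)
    (hY : ∀ᵐ ω ∂μ, 0 ≤ Y ω) (hs : 0 ≤ s) {y : ℝ} (hy : y < upperQuantile μ Y s) :
    1 - s ≤ μ.real {ω | y < Y ω} := by
  have hcompl : {ω | y < Y ω} = {ω | Y ω ≤ y}ᶜ := by ext; simp
  rw [hcompl, measureReal_compl (measurableSet_le hYm measurable_const), probReal_univ,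
    measureReal_def]
  linarith [measure_le_le_of_lt_upperQuantile hY hs hy]

theorem measureReal_le_upperQuantile_le [IsFiniteMeasure μ] (hY : ∀ᵐ ω ∂μ, 0 ≤ Y ω)
    (hs : 0 ≤ s) (hatom : μ {ω | Y ω = upperQuantile μ Y s} = 0) :
    μ.real {ω | Y ω ≤ upperQuantile μ Y s} ≤ s := by
  set q := upperQuantile μ Y s
  have hlt : μ {ω | Y ω < q} ≤ ENNReal.ofReal s :=
    measure_lt_le_of_forall_lt_measure_le Y fun y hy =>
      (ENNReal.le_ofReal_iff_toReal_le (measure_ne_top μ _) hs).2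
        (measure_le_le_of_lt_upperQuantile hY hs hy)
  have hsplit : {ω | Y ω ≤ q} ⊆ {ω | Y ω < q} ∪ {ω | Y ω = q} := fun ω (hω : Y ω ≤ q) =>
    hω.lt_or_eq
  refine ENNReal.toReal_le_of_le_ofReal hs ?_
  calc μ {ω | Y ω ≤ q} ≤ μ {ω | Y ω < q} + μ {ω | Y ω = q} :=
        (measure_mono hsplit).trans (measure_union_le _ _)
    _ ≤ ENNReal.ofReal s := by rw [hatom, add_zero]; exact hlt

end UpperQuantile

/-- Lower bound on VaR under a budget constraint: with Z positive atomless integrable,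
K₁(y) = E[Z·𝟙_{Z ≤ y}], X ≥ 0 with E[Z·X] = x₀ > 0 and K₁(K₀⁻¹(1-γ)) > 0, the VaR
VaR_γ[X] = -G(γ) satisfies -x₀/K₁(K₀⁻¹(1-γ)) ≤ VaR_γ[X] ≤ 0. -/
theorem stmt_16 {Ω : Type*} [MeasurableSpace Ω] (μ : Measure Ω) [IsProbabilityMeasure μ]
    (Z : Ω → ℝ) (hZ : Measurable Z) (hZint : Integrable Z μ)
    (hpos : ∀ᵐ ω ∂μ, 0 < Z ω)
    (hatomless : ∀ a : ℝ, 0 < a → μ {ω | Z ω = a} = 0)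
    (K₀ Kinv K₁ : ℝ → ℝ)
    (hK₀ : ∀ y, K₀ y = (μ {ω | Z ω ≤ y}).toReal)
    (hKinv : ∀ s, Kinv s = sInf {z : ℝ | s < K₀ z})
    (hK₁ : ∀ y, K₁ y = ∫ ω, Set.indicator {ω | Z ω ≤ y} Z ω ∂μ)
    (X : Ω → ℝ) (hX : Measurable X) (hXnonneg : ∀ᵐ ω ∂μ, 0 ≤ X ω)
    (hZXint : Integrable (fun ω => Z ω * X ω) μ)
    (x₀ : ℝ) (hx₀ : 0 < x₀) (hbudget : ∫ ω, Z ω * X ω ∂μ = x₀)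
    (γ : ℝ) (hγ : γ ∈ Set.Ioo (0:ℝ) 1)
    (hK₁pos : 0 < K₁ (Kinv (1 - γ)))
    (G : ℝ → ℝ) (hG : ∀ s, G s = sInf {y : ℝ | s < (μ {ω | X ω ≤ y}).toReal}) :
    -x₀ / K₁ (Kinv (1 - γ)) ≤ -G γ ∧ -G γ ≤ 0 := by
  obtain ⟨hγ0, hγ1⟩ := hγ
  have hZnonneg : ∀ᵐ ω ∂μ, 0 ≤ Z ω := hpos.mono fun _ h => h.le
  have hc : Kinv (1 - γ) = upperQuantile μ Z (1 - γ) := by simp only [hKinv, hK₀, upperQuantile]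
  have hGγ : G γ = upperQuantile μ X γ := hG γ
  set c := upperQuantile μ Z (1 - γ)
  have hBmeas : MeasurableSet {ω | Z ω ≤ c} := hZ measurableSet_Iic
  have hK₁c : K₁ (Kinv (1 - γ)) = ∫ ω in {ω | Z ω ≤ c}, Z ω ∂μ := by
    rw [hK₁, hc, integral_indicator hBmeas]
  rw [hK₁c] at hK₁pos ⊢
  have hcpos : 0 < c := pos_of_setIntegral_le_pos hpos hK₁pos
  have hB := measureReal_le_upperQuantile_le hZnonneg (by linarith) (hatomless c hcpos)
  have hGle : G γ ≤ x₀ / ∫ ω in {ω | Z ω ≤ c}, Z ω ∂μ := by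
    refine le_of_forall_lt_imp_le_of_dense fun t ht => ?_
    rcases le_or_gt t 0 with ht0 | ht0
    · exact ht0.trans (div_pos hx₀ hK₁pos).le
    rw [le_div_iff₀ hK₁pos, ← hbudget]
    have hAmeas : MeasurableSet {ω | t < X ω} := measurableSet_lt measurable_const hX
    have hA := one_sub_le_measureReal_lt_of_lt_upperQuantile hX hXnonneg hγ0.le (hGγ ▸ ht)
    calc t * ∫ ω in {ω | Z ω ≤ c}, Z ω ∂μ ≤ t * ∫ ω in {ω | t < X ω}, Z ω ∂μ := by
          refine mul_le_mul_of_nonneg_left ?_ ht0.le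
          exact setIntegral_le_setIntegral_of_measureReal_le hZint hAmeas hBmeas hcpos.le
            (fun ω hω => hω.1) (fun ω hω => (not_le.1 hω.2).le) (hB.trans hA)
      _ ≤ ∫ ω, Z ω * X ω ∂μ :=
          const_mul_setIntegral_le_integral_mul hZnonneg hXnonneg hZint hZXint hAmeas
            fun ω hω => le_of_lt hω
  have hG0 : 0 ≤ G γ := hGγ ▸ upperQuantile_nonneg hXnonneg hγ0.le
  exact ⟨by rw [neg_div]; exact neg_le_neg hGle, neg_nonpos.2 hG0⟩
end
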